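/- Let n ≥ 2 be an integer and let V_n', V_n'', V_n''' denote the first, second and third derivatives of V_n. Define 𝒱_n(x) = 3·V_n''(x)·( (V_n'(x))² − 2(V_n(x) − V_n(0))·V_n''(x) ) + 2(V_n(x) − V_n(0))·V_n'(x)·V_n'''(x). Then as x → 0 (with x ≠ 0), the quotient 𝒱_n(x)/x⁴ converges to the limit ℓ_n = 96·( Π_{n,0}⁴·Σ_{n−1}(0)²·Σ_{k=1}^n (k−1/2)^{−4} + 4·(−1)^n·Π_{n,0}³·Σ_{n−1}(0)²·Σ_{n−2}(0) ), and ℓ_n > 0. -/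

import Mathlib

open Finset

/-- The φ^{4n} potential `V_n(x) = ∏_{k=1}^n (x² − (k−1/2)²)²`. -/
noncomputable def Vn (n : ℕ) : ℝ → ℝ :=
  fun x => ∏ k ∈ Finset.Icc 1 n, (x ^ 2 - ((k : ℝ) - 1 / 2) ^ 2) ^ 2

/-- `𝒱_n(x) = 3 V_n''(x) ((V_n'(x))² − 2(V_n(x) − V_n(0)) V_n''(x))
      + 2 (V_n(x) − V_n(0)) V_n'(x) V_n'''(x)`. -/
noncomputable def calV (n : ℕ) (x : ℝ) : ℝ :=
  3 * deriv (deriv (Vn n)) x *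
      ((deriv (Vn n) x) ^ 2 - 2 * (Vn n x - Vn n 0) * deriv (deriv (Vn n)) x)
    + 2 * (Vn n x - Vn n 0) * deriv (Vn n) x * deriv (deriv (deriv (Vn n))) x

/-- `Π_{n,0} = ∏_{k=1}^n (k−1/2)²`. -/
noncomputable def PiN0 (n : ℕ) : ℝ :=
  ∏ k ∈ Finset.Icc 1 n, ((k : ℝ) - 1 / 2) ^ 2

/-- `Σ_i(x) = ∑_{P ⊆ {1,…,n}, |P| = i} ∏_{j ∈ P} (x² − (j−1/2)²)`, with `Σ_i = 0` for `i < 0`. -/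
noncomputable def Sig (n : ℕ) (i : ℤ) (x : ℝ) : ℝ :=
  if 0 ≤ i then
    ∑ P ∈ (Finset.Icc 1 n).powersetCard i.toNat, ∏ j ∈ P, (x ^ 2 - ((j : ℝ) - 1 / 2) ^ 2)
  else 0


/-!
Write `a_k = (k - 1/2)²` and `h(u) = ∏ₖ (u - a_k)`, so that `V_n(x) = H(x²)` with `H = h²`.
Substituting `u = x²` turns `𝒱_n(x)` into `u · M(u)` for a polynomial `M` built from `H` and its
derivatives, with `M(0) = 0`; hence `𝒱_n(x) / x⁴ = M(u) / u → M'(0) = 24 c₁(H)² c₂(H)`, where `cᵢ`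
denotes the `i`-th coefficient. By Vieta, `Σ_{n-1}(0) = c₁(h)`, `Σ_{n-2}(0) = c₂(h)` and
`c₀(h) = (-1)ⁿ Π_{n,0}`. The logarithmic derivative `h'/h = ∑ 1/(u - a_k)` and its derivative at `0`
give `c₁(h) = -c₀(h) ∑ 1/a_k` and `c₁(h)² - 2 c₀(h) c₂(h) = c₀(h)² ∑ 1/a_k²`, which turn
`24 c₁(H)² c₂(H)` into `ℓ_n` and show that it is positive.
-/

open Polynomial Filter Topology

namespace Polynomial

theorem coeff_one_sq {R : Type*} [CommSemiring R] (p : R[X]) :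
    (p ^ 2).coeff 1 = 2 * p.coeff 0 * p.coeff 1 := by
  rw [sq, coeff_mul]
  simp only [Finset.Nat.sum_antidiagonal_succ, Finset.Nat.antidiagonal_zero, sum_singleton,
    zero_add]
  ring

theorem coeff_two_sq {R : Type*} [CommSemiring R] (p : R[X]) :
    (p ^ 2).coeff 2 = p.coeff 1 ^ 2 + 2 * p.coeff 0 * p.coeff 2 := by
  rw [sq, coeff_mul]
  simp only [Finset.Nat.sum_antidiagonal_succ, Finset.Nat.antidiagonal_zero, sum_singleton,
    zero_add]
  ring

section ProdXSubC

variable {ι K : Type*} [Field K] (s : Finset ι) (a : ι → K)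

theorem coeff_one_prod_X_sub_C (ha : ∀ i ∈ s, a i ≠ 0) :
    (∏ i ∈ s, (X - C (a i))).coeff 1
      = -(∏ i ∈ s, (X - C (a i))).coeff 0 * ∑ i ∈ s, (a i)⁻¹ := by
  classical
  induction s using Finset.induction_on with
  | empty => simp [coeff_one]
  | insert j s hj ih =>
    rw [prod_insert hj, coeff_X_sub_C_mul, mul_coeff_zero, sum_insert hj,
      ih fun i hi => ha i (mem_insert_of_mem hi)]
    have := ha j (mem_insert_self j s)
    simp only [coeff_sub, coeff_X_zero, coeff_C_zero]
    field_simp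
    ring

theorem coeff_one_sq_sub_prod_X_sub_C (ha : ∀ i ∈ s, a i ≠ 0) :
    (∏ i ∈ s, (X - C (a i))).coeff 1 ^ 2
        - 2 * (∏ i ∈ s, (X - C (a i))).coeff 0 * (∏ i ∈ s, (X - C (a i))).coeff 2
      = (∏ i ∈ s, (X - C (a i))).coeff 0 ^ 2 * ∑ i ∈ s, (a i)⁻¹ ^ 2 := by
  classical
  induction s using Finset.induction_on with
  | empty => simp [coeff_one]
  | insert j s hj ih =>
    rw [prod_insert hj, coeff_X_sub_C_mul, coeff_X_sub_C_mul, mul_coeff_zero, sum_insert hj]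
    have hinv : a j ^ 2 * (a j)⁻¹ ^ 2 = 1 := by
      rw [← mul_pow, mul_inv_cancel₀ (ha j (mem_insert_self j s)), one_pow]
    simp only [coeff_sub, coeff_X_zero, coeff_C_zero, Nat.reduceAdd]
    linear_combination a j ^ 2 * ih (fun i hi => ha i (mem_insert_of_mem hi))
      - (∏ i ∈ s, (X - C (a i))).coeff 0 ^ 2 * hinv

end ProdXSubC

theorem coeff_sq_prod_X_sub_C_pos {ι K : Type*} [Field K] [LinearOrder K]
    [IsStrictOrderedRing K] {s : Finset ι} {a : ι → K} (hs : s.Nonempty)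
    (ha : ∀ i ∈ s, 0 < a i) :
    0 < ((∏ i ∈ s, (X - C (a i))) ^ 2).coeff 1 ^ 2
      * ((∏ i ∈ s, (X - C (a i))) ^ 2).coeff 2 := by
  have ha' : ∀ i ∈ s, a i ≠ 0 := fun i hi => (ha i hi).ne'
  set S₁ := ∑ i ∈ s, (a i)⁻¹
  set S₂ := ∑ i ∈ s, (a i)⁻¹ ^ 2
  set c := (∏ i ∈ s, (X - C (a i))).coeff
  have hc₀ : c 0 ≠ 0 := by
    simp only [c, coeff_zero_eq_eval_zero, eval_prod, eval_sub, eval_X, eval_C]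
    exact prod_ne_zero_iff.mpr fun i hi => by simpa using ha' i hi
  have hS₁ : 0 < S₁ := sum_pos (fun i hi => inv_pos.mpr (ha i hi)) hs
  have hS₂ : S₂ ≤ S₁ ^ 2 :=
    sum_sq_le_sq_sum_of_nonneg fun i hi => (inv_pos.mpr (ha i hi)).le
  have hc₁ : c 1 = -c 0 * S₁ := coeff_one_prod_X_sub_C s a ha'
  have hc₂ : c 1 ^ 2 - 2 * c 0 * c 2 = c 0 ^ 2 * S₂ := coeff_one_sq_sub_prod_X_sub_C s a ha'
  have key : (2 * c 0 * c 1) ^ 2 * (c 1 ^ 2 + 2 * c 0 * c 2)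
      = 4 * (c 0 ^ 2) ^ 3 * S₁ ^ 2 * (2 * S₁ ^ 2 - S₂) := by
    have : c 1 ^ 2 + 2 * c 0 * c 2 = 2 * c 1 ^ 2 - c 0 ^ 2 * S₂ := by linear_combination -hc₂
    rw [this, hc₁]
    ring
  rw [coeff_one_sq, coeff_two_sq, key]
  have : 0 < 2 * S₁ ^ 2 - S₂ := by nlinarith
  positivity

end Polynomial

noncomputable def calVOf (V : ℝ → ℝ) (x : ℝ) : ℝ :=
  3 * deriv (deriv V) x * ((deriv V x) ^ 2 - 2 * (V x - V 0) * deriv (deriv V) x)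
    + 2 * (V x - V 0) * deriv V x * deriv (deriv (deriv V)) x

theorem calV_eq (n : ℕ) : calV n = calVOf (Vn n) := rfl

/-- For `V(x) = H(x²)` and `u = x²`: `V' = 2x H'(u)`, `V'' = 2H'(u) + 4u H''(u)`,
`V''' = x (12 H''(u) + 8u H'''(u))` and `V(x) - V(0) = u (divX H)(u)`, so that
`calVOf V x = u * (calVReduced H).eval u`. -/
noncomputable def calVReduced (H : ℝ[X]) : ℝ[X] :=
  3 * (2 * derivative H + 4 * X * derivative^[2] H) *
      (4 * derivative H ^ 2 - 2 * H.divX * (2 * derivative H + 4 * X * derivative^[2] H))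
    + 4 * X * H.divX * derivative H * (12 * derivative^[2] H + 8 * X * derivative^[3] H)

theorem deriv_polynomial_eval (p : ℝ[X]) :
    deriv (fun x => p.eval x) = fun x => (derivative p).eval x :=
  funext fun _ => Polynomial.deriv p

theorem calVOf_eval_sq (H : ℝ[X]) (x : ℝ) :
    calVOf (fun y => H.eval (y ^ 2)) x = x ^ 2 * (calVReduced H).eval (x ^ 2) := by
  have hV : (fun y : ℝ => H.eval (y ^ 2)) = fun y => (H.comp (X ^ 2)).eval y := by
    simp [eval_comp]
  have hK := congrArg (eval (x ^ 2)) (X_mul_divX_add H)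
  simp only [eval_add, eval_mul, eval_X, eval_C] at hK
  rw [hV]
  simp only [calVOf, deriv_polynomial_eval]
  simp only [calVReduced, Function.iterate_succ, Function.iterate_zero, Function.comp_apply,
    id_eq, derivative_comp, derivative_mul, derivative_X_pow_succ, derivative_X,
    derivative_one, map_add, map_one, Nat.cast_one, pow_one, mul_one, zero_mul, add_zero,
    zero_add, eval_add, eval_sub, eval_mul, eval_pow, eval_one, eval_ofNat, eval_X, eval_comp,
    ne_eq, OfNat.ofNat_ne_zero, not_false_eq_true, zero_pow, ← coeff_zero_eq_eval_zero]
  rw [← hK]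
  ring

theorem calVReduced_eval_zero (H : ℝ[X]) : (calVReduced H).eval 0 = 0 := by
  simp only [calVReduced, Function.iterate_succ, Function.comp_apply, eval_add, eval_sub,
    eval_mul, eval_pow, eval_ofNat, eval_X, ← coeff_zero_eq_eval_zero, coeff_derivative,
    coeff_divX]
  ring

theorem derivative_calVReduced_eval_zero (H : ℝ[X]) :
    (derivative (calVReduced H)).eval 0 = 24 * H.coeff 1 ^ 2 * H.coeff 2 := by
  simp only [calVReduced, Function.iterate_succ, Function.comp_apply, derivative_add,
    derivative_sub, derivative_mul, derivative_pow, derivative_ofNat, derivative_X, eval_add,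
    eval_sub, eval_mul, eval_pow, eval_ofNat, eval_C, eval_X, ← coeff_zero_eq_eval_zero,
    coeff_derivative, coeff_divX]
  norm_num
  ring

theorem tendsto_calVOf_eval_sq_div_pow_four (H : ℝ[X]) :
    Tendsto (fun x => calVOf (fun y => H.eval (y ^ 2)) x / x ^ 4) (𝓝[≠] 0)
      (𝓝 (24 * H.coeff 1 ^ 2 * H.coeff 2)) := by
  have hslope := hasDerivAt_iff_tendsto_slope.mp ((calVReduced H).hasDerivAt 0)
  rw [derivative_calVReduced_eval_zero] at hslope
  have hsq : Tendsto (fun x : ℝ => x ^ 2) (𝓝[≠] 0) (𝓝[≠] 0) := by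
    refine tendsto_nhdsWithin_iff.mpr ⟨?_, ?_⟩
    · simpa using ((continuous_pow 2).tendsto (0 : ℝ)).mono_left nhdsWithin_le_nhds
    · filter_upwards [self_mem_nhdsWithin] with x hx using pow_ne_zero 2 hx
  refine (hslope.comp hsq).congr' ?_
  filter_upwards [self_mem_nhdsWithin] with x hx
  simp only [Function.comp_apply, slope_def_field, calVOf_eval_sq, calVReduced_eval_zero]
  field_simp
  ring

noncomputable def vacuaPoly (n : ℕ) : ℝ[X] :=
  ∏ k ∈ Icc 1 n, (X - C (((k : ℝ) - 1 / 2) ^ 2))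

theorem Vn_eq_eval_sq (n : ℕ) : Vn n = fun x => (vacuaPoly n ^ 2).eval (x ^ 2) := by
  ext x
  simp [Vn, vacuaPoly, eval_prod, prod_pow]

theorem sq_sub_half_pos {n k : ℕ} (hk : k ∈ Icc 1 n) : 0 < ((k : ℝ) - 1 / 2) ^ 2 := by
  have : (1 : ℝ) ≤ k := by exact_mod_cast (mem_Icc.mp hk).1
  have : (0 : ℝ) < k - 1 / 2 := by linarith
  positivity

theorem Sig_sub_eq_coeff_vacuaPoly {n i : ℕ} (hi : i ≤ n) :
    Sig n ((n : ℤ) - i) 0 = (vacuaPoly n).coeff i := by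
  have hcard : #(Icc 1 n) = n := by simp
  rw [Sig, if_pos (by omega), vacuaPoly]
  simp_rw [sub_eq_add_neg (X : ℝ[X]), ← C_neg]
  rw [Finset.prod_X_add_C_coeff _ _ (by omega), hcard, show ((n : ℤ) - i).toNat = n - i by omega]
  simp

theorem vacuaPoly_coeff_zero (n : ℕ) : (vacuaPoly n).coeff 0 = (-1) ^ n * PiN0 n := by
  simp [vacuaPoly, coeff_zero_eq_eval_zero, eval_prod, PiN0, prod_neg]

theorem limit_eq_coeff_vacuaPoly_sq {n : ℕ} (hn : 2 ≤ n) :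
    96 * ((PiN0 n) ^ 4 * (Sig n ((n : ℤ) - 1) 0) ^ 2 *
          (∑ k ∈ Finset.Icc 1 n, (((k : ℝ) - 1 / 2) ^ 4)⁻¹)
        + 4 * (-1) ^ n * (PiN0 n) ^ 3 * (Sig n ((n : ℤ) - 1) 0) ^ 2 * Sig n ((n : ℤ) - 2) 0)
      = 24 * (vacuaPoly n ^ 2).coeff 1 ^ 2 * (vacuaPoly n ^ 2).coeff 2 := by
  have hσ₁ : Sig n ((n : ℤ) - 1) 0 = (vacuaPoly n).coeff 1 := by
    exact_mod_cast Sig_sub_eq_coeff_vacuaPoly (by omega : 1 ≤ n)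
  have hσ₂ : Sig n ((n : ℤ) - 2) 0 = (vacuaPoly n).coeff 2 := by
    exact_mod_cast Sig_sub_eq_coeff_vacuaPoly hn
  have hS₂ : ∑ k ∈ Icc 1 n, (((k : ℝ) - 1 / 2) ^ 4)⁻¹
      = ∑ k ∈ Icc 1 n, (((k : ℝ) - 1 / 2) ^ 2)⁻¹ ^ 2 :=
    sum_congr rfl fun k _ => by rw [inv_pow, ← pow_mul]
  have hε : ((-1 : ℝ) ^ n) ^ 2 = 1 := by rw [← pow_mul, mul_comm, pow_mul]; norm_num
  have hPi : PiN0 n = (-1) ^ n * (vacuaPoly n).coeff 0 := by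
    rw [vacuaPoly_coeff_zero, ← mul_assoc, ← sq, hε, one_mul]
  have hc₂ : (vacuaPoly n).coeff 1 ^ 2 - 2 * (vacuaPoly n).coeff 0 * (vacuaPoly n).coeff 2
      = (vacuaPoly n).coeff 0 ^ 2 * ∑ k ∈ Icc 1 n, (((k : ℝ) - 1 / 2) ^ 2)⁻¹ ^ 2 :=
    coeff_one_sq_sub_prod_X_sub_C _ _ fun k hk => (sq_sub_half_pos hk).ne'
  rw [coeff_one_sq, coeff_two_sq, hσ₁, hσ₂, hS₂, hPi]
  set ε : ℝ := (-1) ^ n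
  set c := (vacuaPoly n).coeff
  set S₂ := ∑ k ∈ Icc 1 n, (((k : ℝ) - 1 / 2) ^ 2)⁻¹ ^ 2
  linear_combination 96 * (ε ^ 2 + 1) * (c 0 ^ 4 * c 1 ^ 2 * S₂ + 4 * c 0 ^ 3 * c 1 ^ 2 * c 2) * hε
    - 96 * c 0 ^ 2 * c 1 ^ 2 * hc₂

theorem stmt6 (n : ℕ) (hn : 2 ≤ n) :
    Filter.Tendsto (fun x : ℝ => calV n x / x ^ 4) (nhdsWithin 0 {(0 : ℝ)}ᶜ)
      (nhds (96 * ((PiN0 n) ^ 4 * (Sig n ((n : ℤ) - 1) 0) ^ 2 *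
          (∑ k ∈ Finset.Icc 1 n, (((k : ℝ) - 1 / 2) ^ 4)⁻¹)
        + 4 * (-1) ^ n * (PiN0 n) ^ 3 * (Sig n ((n : ℤ) - 1) 0) ^ 2 * Sig n ((n : ℤ) - 2) 0))) ∧
    0 < 96 * ((PiN0 n) ^ 4 * (Sig n ((n : ℤ) - 1) 0) ^ 2 *
          (∑ k ∈ Finset.Icc 1 n, (((k : ℝ) - 1 / 2) ^ 4)⁻¹)
        + 4 * (-1) ^ n * (PiN0 n) ^ 3 * (Sig n ((n : ℤ) - 1) 0) ^ 2 * Sig n ((n : ℤ) - 2) 0) := by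
  rw [limit_eq_coeff_vacuaPoly_sq hn, calV_eq, Vn_eq_eval_sq]
  refine ⟨tendsto_calVOf_eval_sq_div_pow_four _, ?_⟩
  rw [mul_assoc]
  exact mul_pos (by norm_num)
    (coeff_sq_prod_X_sub_C_pos (nonempty_Icc.mpr (by omega)) fun k hk => sq_sub_half_pos hk)
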